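/- For a standard 4-dimensional Brownian motion (β_t), there is a constant C < ∞ such that for all t > 0 and x, y ∈ R^4 with x ≠ y: E[|β_t − x|^{-2} |β_t − y|^{-1}] ≤ 2C t^{-1/2} |x|^{-1} |y − x|^{-1}. -/

import Mathlib

/-!
With `u = |z - x|⁻¹`, `v = |z - y|⁻¹`, the triangle inequality `|y - x| ≤ u⁻¹ + v⁻¹` gives
`|y - x| u² v ≤ u² + u v` pointwise. So it suffices to bound `E[u²]` and, by Cauchy–Schwarz,
`E[u v] ≤ E[u²]^{1/2} E[v²]^{1/2}`; both follow from `E|β_t - a|⁻² ≤ κ² min(t⁻¹, |a|⁻²)`, whose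
geometric mean is `κ² t^{-1/2} |a|⁻¹`.

For that moment bound split `R⁴` at the ball of radius `ρ` around `a`: outside it the integrand
is at most `ρ⁻²`; inside, the Gaussian density is bounded by some `K`, and by scaling
`∫_{|w|<ρ} |w|⁻² dw = ρ² ∫_{|w|<1} |w|⁻² dw`, which is finite in dimension four. The choice
`ρ = √t` gives `t⁻¹`; the choice `ρ = |a|/2`, on which the density is exponentially small,
gives `|a|⁻²`.
-/

open MeasureTheory ProbabilityTheory
open scoped NNReal ENNReal

noncomputable section

/-- Euclidean norm on `Fin d → ℝ`. -/
def nrm {d : ℕ} (x : Fin d → ℝ) : ℝ := Real.sqrt (∑ i, (x i) ^ 2)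

/-- The law of a standard `d`-dimensional Brownian motion at time `t`:
`d` independent centered Gaussians of variance `t`. -/
def gaussPi (d : ℕ) (t : ℝ≥0) : Measure (Fin d → ℝ) :=
  Measure.pi fun _ => gaussianReal 0 t

open Set Metric Real

lemma nrm_eq_norm_toLp {d : ℕ} (x : Fin d → ℝ) : nrm x = ‖WithLp.toLp 2 x‖ := by
  simp [nrm, EuclideanSpace.norm_eq]

lemma nrm_nonneg {d : ℕ} (x : Fin d → ℝ) : 0 ≤ nrm x := Real.sqrt_nonneg _

lemma nrm_pos {d : ℕ} {x : Fin d → ℝ} (hx : x ≠ 0) : 0 < nrm x := by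
  rw [nrm_eq_norm_toLp]
  exact norm_pos_iff.mpr (by simpa using hx)

lemma nrm_sq {d : ℕ} (x : Fin d → ℝ) : nrm x ^ 2 = ∑ i, x i ^ 2 :=
  Real.sq_sqrt (Finset.sum_nonneg fun _ _ => sq_nonneg _)

lemma nrm_smul {d : ℕ} (r : ℝ) (x : Fin d → ℝ) : nrm (r • x) = |r| * nrm x := by
  simp only [nrm_eq_norm_toLp, WithLp.toLp_smul, norm_smul, Real.norm_eq_abs]

lemma nrm_sub_le_add {d : ℕ} (x y z : Fin d → ℝ) :
    nrm (y - x) ≤ nrm (z - x) + nrm (z - y) := by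
  simp only [nrm_eq_norm_toLp, WithLp.toLp_sub, ← dist_eq_norm]
  exact dist_comm (WithLp.toLp 2 x) (WithLp.toLp 2 y) ▸ dist_triangle_left _ _ _

lemma norm_le_nrm {d : ℕ} (x : Fin d → ℝ) : ‖x‖ ≤ nrm x := by
  rw [nrm_eq_norm_toLp]
  exact pi_norm_le_iff_of_nonneg (norm_nonneg _) |>.mpr fun i =>
    PiLp.norm_apply_le (WithLp.toLp 2 x) i

@[fun_prop]
lemma continuous_nrm {d : ℕ} : Continuous (nrm (d := d)) := by
  unfold nrm; fun_prop

lemma exp_neg_le_two_div_sq {s : ℝ} (hs : 0 < s) : exp (-s) ≤ 2 / s ^ 2 := by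
  have h := pow_div_factorial_le_exp s hs.le 2
  rw [exp_neg, ← one_div, div_le_div_iff₀ (exp_pos s) (by positivity)]
  norm_num at h
  linarith

lemma inv_sqrt_two_pi_mul_pow_four_le {t : ℝ} (ht : 0 < t) :
    (√(2 * π * t))⁻¹ ^ 4 ≤ (t ^ 2)⁻¹ := by
  rw [inv_pow, show 4 = 2 * 2 from rfl, pow_mul, sq_sqrt (by positivity)]
  gcongr
  nlinarith [pi_gt_three]

lemma ENNReal.le_mul_of_le_sq_of_le_sq {x p q : ℝ≥0∞} (hp : x ≤ p ^ 2) (hq : x ≤ q ^ 2) :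
    x ≤ p * q := by
  rcases le_total p q with h | h
  · exact hp.trans (by rw [sq]; gcongr)
  · exact hq.trans (by rw [sq]; gcongr)

lemma ENNReal.sq_mul_le_inv_mul_add {u v D : ℝ≥0∞} (hD₀ : D ≠ 0) (hD : D ≠ ⊤)
    (h : D ≤ u⁻¹ + v⁻¹) : u ^ 2 * v ≤ D⁻¹ * (u ^ 2 + u * v) := by
  refine (ENNReal.mul_le_iff_le_inv hD₀ hD).mp ?_
  calc D * (u ^ 2 * v) ≤ (u⁻¹ + v⁻¹) * (u ^ 2 * v) := by gcongr
    _ = (u⁻¹ * u) * (u * v) + (v⁻¹ * v) * u ^ 2 := by ring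
    _ ≤ 1 * (u * v) + 1 * u ^ 2 := by gcongr <;> exact ENNReal.inv_mul_le_one _
    _ = u ^ 2 + u * v := by ring

theorem MeasureTheory.lintegral_fin_prod_eq_prod {α : Type*} [MeasurableSpace α] {n : ℕ}
    {μ : Fin n → Measure α} [∀ i, SigmaFinite (μ i)]
    {f : Fin n → α → ℝ≥0∞} (hf : ∀ i, Measurable (f i)) :
    ∫⁻ x, ∏ i, f i (x i) ∂(Measure.pi μ) = ∏ i, ∫⁻ x, f i x ∂(μ i) := by
  induction n with
  | zero => simp
  | succ n ih =>
    have htail : Measurable fun y : Fin n → α => ∏ i, f i.succ (y i) :=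
      Finset.measurable_prod _ fun i _ => (hf _).comp (measurable_pi_apply i)
    have hsplit : Measurable fun x : α × (Fin n → α) => f 0 x.1 * ∏ i, f i.succ (x.2 i) :=
      ((hf 0).comp measurable_fst).mul (htail.comp measurable_snd)
    calc _ = ∫⁻ x, f 0 x.1 * ∏ i : Fin n, f i.succ (x.2 i)
            ∂((μ 0).prod (Measure.pi fun i ↦ μ i.succ)) :=
          (lintegral_congr fun x => Fin.prod_univ_succ _).trans
            ((measurePreserving_piFinSuccAbove μ 0).lintegral_comp hsplit)
      _ = ∏ i, ∫⁻ x, f i x ∂(μ i) := by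
          rw [lintegral_prod_mul (hf 0).aemeasurable htail.aemeasurable, ih fun i => hf _,
            Fin.prod_univ_succ]

theorem MeasureTheory.Measure.pi_fin_withDensity {α : Type*} [MeasurableSpace α] {n : ℕ}
    {μ : Fin n → Measure α} [∀ i, SigmaFinite (μ i)]
    {f : Fin n → α → ℝ≥0∞} (hf : ∀ i, Measurable (f i))
    [∀ i, SigmaFinite ((μ i).withDensity (f i))] :
    Measure.pi (fun i => (μ i).withDensity (f i))
      = (Measure.pi μ).withDensity (fun x => ∏ i, f i (x i)) := by
  refine Measure.pi_eq fun s hs => ?_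
  have hind : (univ.pi s).indicator (fun x => ∏ i, f i (x i))
      = fun x => ∏ i, (s i).indicator (f i) (x i) := by
    ext x
    by_cases hx : x ∈ univ.pi s
    · rw [indicator_of_mem hx]
      exact Finset.prod_congr rfl fun i _ => (indicator_of_mem (hx i (mem_univ i)) _).symm
    · obtain ⟨i, hi⟩ : ∃ i, x i ∉ s i := by simpa using hx
      rw [indicator_of_notMem hx,
        Finset.prod_eq_zero (Finset.mem_univ i) (indicator_of_notMem hi _)]
  rw [withDensity_apply _ (MeasurableSet.univ_pi hs),
    ← lintegral_indicator (MeasurableSet.univ_pi hs), hind,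
    lintegral_fin_prod_eq_prod fun i => (hf i).indicator (hs i)]
  simp_rw [withDensity_apply _ (hs _), lintegral_indicator (hs _)]

lemma lintegral_mul_le_of_le_sq {α : Type*} [MeasurableSpace α] {μ : Measure α}
    {f g : α → ℝ≥0∞} (hf : AEMeasurable f μ) (hg : AEMeasurable g μ) {p q : ℝ≥0∞}
    (hfp : ∫⁻ x, f x ^ 2 ∂μ ≤ p ^ 2) (hgq : ∫⁻ x, g x ^ 2 ∂μ ≤ q ^ 2) :
    ∫⁻ x, f x * g x ∂μ ≤ p * q := by
  have hsqrt : ∀ {r s : ℝ≥0∞}, r ≤ s ^ 2 → r ^ (1 / 2 : ℝ) ≤ s := fun {r s} h =>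
    calc r ^ (1 / 2 : ℝ) ≤ (s ^ 2) ^ (1 / 2 : ℝ) := ENNReal.rpow_le_rpow h (by norm_num)
      _ = s := by simpa using ENNReal.pow_rpow_inv_natCast two_ne_zero s
  have hcs := ENNReal.lintegral_mul_le_Lp_mul_Lq μ Real.HolderConjugate.two_two hf hg
  simp only [Pi.mul_apply, ENNReal.rpow_two] at hcs
  exact hcs.trans (mul_le_mul' (hsqrt hfp) (hsqrt hgq))

def invNrmSqBallIntegral (d : ℕ) : ℝ≥0∞ :=
  ∫⁻ w in {w : Fin d → ℝ | nrm w < 1}, (ENNReal.ofReal (nrm w))⁻¹ ^ 2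

lemma invNrmSqBallIntegral_lt_top {d : ℕ} (hd : 2 < d) : invNrmSqBallIntegral d < ⊤ := by
  have hint : IntegrableOn (fun w : Fin d → ℝ => (‖w‖ ^ 2)⁻¹) (ball 0 1) := by
    refine integrableOn_ball_of_norm_le_rpow (C := 1) (α := 2) (by simp; omega)
      (by simp; exact_mod_cast hd) (ae_of_all _ fun w => ?_) (by fun_prop)
    simp [Real.rpow_neg (norm_nonneg w)]
  -- the sup norm `‖w‖` is at most `nrm w`, so `‖w‖⁻²` dominates the integrand
  have hsub : {w : Fin d → ℝ | nrm w < 1} ⊆ ball 0 1 := fun w hw =>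
    mem_ball_zero_iff.mpr ((norm_le_nrm w).trans_lt hw)
  refine lt_of_le_of_lt ?_ hint.lintegral_lt_top
  refine (lintegral_mono_set hsub).trans (setLIntegral_mono_ae (by fun_prop) ?_)
  have : Nonempty (Fin d) := ⟨⟨0, by omega⟩⟩
  filter_upwards [Measure.ae_ne volume 0] with w hw _
  rw [ENNReal.ofReal_inv_of_pos (by positivity), ENNReal.ofReal_pow (norm_nonneg w),
    ENNReal.inv_pow]
  gcongr
  exact norm_le_nrm w

lemma setLIntegral_nrm_lt_inv_sq {d : ℕ} (hd : 2 ≤ d) {ρ : ℝ} (hρ : 0 < ρ) :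
    ∫⁻ w in {w : Fin d → ℝ | nrm w < ρ}, (ENNReal.ofReal (nrm w))⁻¹ ^ 2
      = ENNReal.ofReal (ρ ^ (d - 2)) * invNrmSqBallIntegral d := by
  set G : (Fin d → ℝ) → ℝ≥0∞ := fun w => (ENNReal.ofReal (nrm w))⁻¹ ^ 2
  have hball : ∀ r : ℝ, MeasurableSet {w : Fin d → ℝ | nrm w < r} := fun r =>
    measurableSet_lt (by fun_prop) measurable_const
  have hG_smul : ∀ v, {w | nrm w < ρ}.indicator G (ρ • v)
      = ENNReal.ofReal ((ρ ^ 2)⁻¹) * {w | nrm w < 1}.indicator G v := by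
    intro v
    have hv : ρ • v ∈ {w | nrm w < ρ} ↔ v ∈ {w | nrm w < 1} := by
      simp [nrm_smul, abs_of_pos hρ, hρ]
    by_cases h : v ∈ {w | nrm w < 1}
    · rw [indicator_of_mem (hv.mpr h), indicator_of_mem h]
      simp only [G, nrm_smul, abs_of_pos hρ, ENNReal.ofReal_mul hρ.le]
      rw [ENNReal.mul_inv (by simp [hρ]) (by simp), mul_pow,
        ENNReal.ofReal_inv_of_pos (by positivity), ENNReal.ofReal_pow hρ.le, ENNReal.inv_pow]
    · rw [indicator_of_notMem (mt hv.mp h), indicator_of_notMem h, mul_zero]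
  have key : ENNReal.ofReal ((ρ ^ d)⁻¹) * ∫⁻ w in {w | nrm w < ρ}, G w
      = ENNReal.ofReal ((ρ ^ 2)⁻¹) * invNrmSqBallIntegral d := by
    -- substitute `w = ρ • v`
    have hmap := Measure.map_addHaar_smul (volume : Measure (Fin d → ℝ)) hρ.ne'
    rw [Module.finrank_fin_fun, abs_of_pos (by positivity)] at hmap
    rw [invNrmSqBallIntegral, ← lintegral_indicator (hball _), ← lintegral_indicator (hball _),
      ← smul_eq_mul, ← lintegral_smul_measure, ← hmap,
      lintegral_map ((by fun_prop : Measurable G).indicator (hball _)) (by fun_prop),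
      ← lintegral_const_mul _ ((by fun_prop : Measurable G).indicator (hball _))]
    simp_rw [hG_smul]
  calc _ = ENNReal.ofReal (ρ ^ d) *
        (ENNReal.ofReal ((ρ ^ d)⁻¹) * ∫⁻ w in {w | nrm w < ρ}, G w) := by
        rw [← mul_assoc, ← ENNReal.ofReal_mul (by positivity),
          mul_inv_cancel₀ (by positivity), ENNReal.ofReal_one, one_mul]
    _ = _ := by
        rw [key, ← mul_assoc, ← ENNReal.ofReal_mul (by positivity), pow_sub₀ _ hρ.ne' hd]

instance {d : ℕ} {t : ℝ≥0} : IsProbabilityMeasure (gaussPi d t) := by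
  unfold gaussPi; infer_instance

lemma gaussPi_eq_withDensity {d : ℕ} {t : ℝ≥0} (ht : t ≠ 0) :
    gaussPi d t = volume.withDensity fun z => ∏ i, gaussianPDF 0 t (z i) := by
  have : SigmaFinite ((volume : Measure ℝ).withDensity (gaussianPDF 0 t)) := by
    rw [← gaussianReal_of_var_ne_zero 0 ht]; infer_instance
  simp_rw [gaussPi, gaussianReal_of_var_ne_zero 0 ht]
  rw [Measure.pi_fin_withDensity fun _ => measurable_gaussianPDF 0 t, volume_pi]

lemma prod_gaussianPDF {d : ℕ} (t : ℝ≥0) (z : Fin d → ℝ) :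
    ∏ i, gaussianPDF 0 t (z i)
      = ENNReal.ofReal ((√(2 * π * t))⁻¹ ^ d * exp (-nrm z ^ 2 / (2 * t))) := by
  simp_rw [gaussianPDF_def, gaussianPDFReal_def]
  rw [← ENNReal.ofReal_prod_of_nonneg fun i _ => by positivity, Finset.prod_mul_distrib,
    ← Real.exp_sum, Finset.prod_const, Finset.card_univ, Fintype.card_fin, nrm_sq]
  simp only [sub_zero, neg_div, Finset.sum_neg_distrib, Finset.sum_div]

lemma lintegral_gaussPi_inv_nrm_sub_sq_le_of_density_le {d : ℕ} {t : ℝ≥0} (ht : t ≠ 0)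
    (a : Fin d → ℝ) {ρ K : ℝ} (hρ : 0 < ρ)
    (hK : ∀ z, nrm (z - a) < ρ →
      (√(2 * π * t))⁻¹ ^ d * exp (-nrm z ^ 2 / (2 * t)) ≤ K) :
    ∫⁻ z, (ENNReal.ofReal (nrm (z - a)))⁻¹ ^ 2 ∂gaussPi d t
      ≤ ENNReal.ofReal K *
          (∫⁻ w in {w : Fin d → ℝ | nrm w < ρ}, (ENNReal.ofReal (nrm w))⁻¹ ^ 2)
        + ENNReal.ofReal ((ρ ^ 2)⁻¹) := by
  set G : (Fin d → ℝ) → ℝ≥0∞ := fun w => (ENNReal.ofReal (nrm w))⁻¹ ^ 2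
  set S := {z : Fin d → ℝ | nrm (z - a) < ρ}
  have hS : MeasurableSet S := measurableSet_lt (by fun_prop) measurable_const
  have hnear : ∫⁻ z in S, G (z - a) ∂gaussPi d t
      ≤ ENNReal.ofReal K * ∫⁻ w in {w | nrm w < ρ}, G w := by
    rw [gaussPi_eq_withDensity ht,
      setLIntegral_withDensity_eq_setLIntegral_mul _ (by fun_prop) (by fun_prop) hS]
    calc _ ≤ ∫⁻ z in S, ENNReal.ofReal K * G (z - a) :=
          setLIntegral_mono (by fun_prop) fun z hz => mul_le_mul_left
            ((prod_gaussianPDF t z).trans_le (ENNReal.ofReal_le_ofReal (hK z hz))) _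
      _ = ENNReal.ofReal K * ∫⁻ w in {w | nrm w < ρ}, G w := by
          rw [lintegral_const_mul _ (by fun_prop), ← lintegral_indicator hS,
            ← lintegral_indicator (measurableSet_lt (by fun_prop) measurable_const),
            ← lintegral_sub_right_eq_self ({w | nrm w < ρ}.indicator G) a]
          rfl
  have hfar : ∫⁻ z in Sᶜ, G (z - a) ∂gaussPi d t ≤ ENNReal.ofReal ((ρ ^ 2)⁻¹) := by
    calc _ ≤ ∫⁻ z in Sᶜ, ENNReal.ofReal ((ρ ^ 2)⁻¹) ∂gaussPi d t := by
          refine setLIntegral_mono measurable_const fun z hz => ?_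
          rw [ENNReal.ofReal_inv_of_pos (by positivity), ENNReal.ofReal_pow hρ.le,
            ENNReal.inv_pow]
          simp only [G]
          gcongr
          exact not_lt.mp hz
      _ ≤ ∫⁻ z, ENNReal.ofReal ((ρ ^ 2)⁻¹) ∂gaussPi d t := setLIntegral_le_lintegral _ _
      _ = ENNReal.ofReal ((ρ ^ 2)⁻¹) := by simp
  rw [← lintegral_add_compl _ hS]
  exact add_le_add hnear hfar

lemma lintegral_gaussPi_four_inv_nrm_sub_sq_le_of_density_le {t : ℝ≥0} (ht : t ≠ 0)
    (a : Fin 4 → ℝ) {ρ k : ℝ} (hρ : 0 < ρ) (hk : 0 ≤ k)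
    (hK : ∀ z, nrm (z - a) < ρ →
      (√(2 * π * t))⁻¹ ^ 4 * exp (-nrm z ^ 2 / (2 * t)) ≤ k / ρ ^ 4) :
    ∫⁻ z, (ENNReal.ofReal (nrm (z - a)))⁻¹ ^ 2 ∂gaussPi 4 t
      ≤ (ENNReal.ofReal k * invNrmSqBallIntegral 4 + 1) * (ENNReal.ofReal ρ)⁻¹ ^ 2 := by
  refine (lintegral_gaussPi_inv_nrm_sub_sq_le_of_density_le ht a hρ hK).trans_eq ?_
  have hρ_inv : (ENNReal.ofReal ρ)⁻¹ ^ 2 = ENNReal.ofReal ((ρ ^ 2)⁻¹) := by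
    rw [ENNReal.ofReal_inv_of_pos (by positivity), ENNReal.ofReal_pow hρ.le, ENNReal.inv_pow]
  have hscale : ENNReal.ofReal (k / ρ ^ 4) * ENNReal.ofReal (ρ ^ (4 - 2))
      = ENNReal.ofReal k * ENNReal.ofReal ((ρ ^ 2)⁻¹) := by
    rw [← ENNReal.ofReal_mul (by positivity), ← ENNReal.ofReal_mul hk]
    congr 1
    field_simp
  rw [setLIntegral_nrm_lt_inv_sq (by norm_num) hρ, ← mul_assoc, hscale, hρ_inv]
  ring

lemma lintegral_gaussPi_four_inv_nrm_sub_sq_le_inv_time {t : ℝ≥0} (ht : 0 < t)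
    (a : Fin 4 → ℝ) :
    ∫⁻ z, (ENNReal.ofReal (nrm (z - a)))⁻¹ ^ 2 ∂gaussPi 4 t
      ≤ (invNrmSqBallIntegral 4 + 1) * (ENNReal.ofReal √t)⁻¹ ^ 2 := by
  have ht' : (0 : ℝ) < t := ht
  have h := lintegral_gaussPi_four_inv_nrm_sub_sq_le_of_density_le ht.ne' a (sqrt_pos.mpr ht')
    zero_le_one fun z _ => ?_
  · simpa using h
  calc (√(2 * π * t))⁻¹ ^ 4 * exp (-nrm z ^ 2 / (2 * t))
      ≤ (√(2 * π * t))⁻¹ ^ 4 * 1 := by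
        gcongr
        exact exp_le_one_iff.mpr (by rw [neg_div]; exact neg_nonpos.mpr (by positivity))
    _ ≤ ((t : ℝ) ^ 2)⁻¹ := by
        rw [mul_one]
        exact inv_sqrt_two_pi_mul_pow_four_le ht'
    _ = 1 / √t ^ 4 := by rw [show 4 = 2 * 2 from rfl, pow_mul, sq_sqrt ht'.le, one_div]

lemma lintegral_gaussPi_four_inv_nrm_sub_sq_le_inv_nrm {t : ℝ≥0} (ht : 0 < t)
    (a : Fin 4 → ℝ) :
    ∫⁻ z, (ENNReal.ofReal (nrm (z - a)))⁻¹ ^ 2 ∂gaussPi 4 t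
      ≤ 4 * (8 * invNrmSqBallIntegral 4 + 1) * (ENNReal.ofReal (nrm a))⁻¹ ^ 2 := by
  have ht' : (0 : ℝ) < t := ht
  rcases eq_or_ne a 0 with rfl | ha
  · simp [nrm]
  set ρ := nrm a / 2 with hρ_def
  have hρ : 0 < ρ := half_pos (nrm_pos ha)
  have h := lintegral_gaussPi_four_inv_nrm_sub_sq_le_of_density_le ht.ne' a hρ (k := 8)
    (by norm_num) fun z hz => ?_
  · refine h.trans_eq ?_
    have hρ_inv : (ENNReal.ofReal ρ)⁻¹ = 2 * (ENNReal.ofReal (nrm a))⁻¹ := by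
      rw [hρ_def, ENNReal.ofReal_div_of_pos two_pos, ENNReal.ofReal_ofNat,
        ENNReal.inv_div (by simp) (by simp), div_eq_mul_inv]
    rw [hρ_inv, ENNReal.ofReal_ofNat]
    ring
  -- Near `a` we have `|z| ≥ |a| / 2`, so the density is `≲ t⁻² e^{-|a|²/8t} ≲ |a|⁻⁴`.
  have hρz : ρ ≤ nrm z := by
    have := nrm_sub_le_add 0 a z
    simp only [sub_zero] at this
    linarith
  have hs : 0 < ρ ^ 2 / (2 * t) := by positivity
  calc (√(2 * π * t))⁻¹ ^ 4 * exp (-nrm z ^ 2 / (2 * t))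
      ≤ ((t : ℝ) ^ 2)⁻¹ * (2 / (ρ ^ 2 / (2 * t)) ^ 2) := by
        gcongr
        · exact inv_sqrt_two_pi_mul_pow_four_le ht'
        · rw [neg_div]
          refine (exp_le_exp.mpr ?_).trans (exp_neg_le_two_div_sq hs)
          gcongr
    _ = 8 / ρ ^ 4 := by
        field_simp
        ring

lemma exists_lintegral_gaussPi_four_inv_nrm_sub_sq_le :
    ∃ κ : ℝ≥0∞, 0 < κ ∧ κ ≠ ⊤ ∧ ∀ (t : ℝ≥0) (a : Fin 4 → ℝ), 0 < t →
      ∫⁻ z, (ENNReal.ofReal (nrm (z - a)))⁻¹ ^ 2 ∂gaussPi 4 t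
          ≤ (κ * (ENNReal.ofReal √t)⁻¹) ^ 2 ∧
        ∫⁻ z, (ENNReal.ofReal (nrm (z - a)))⁻¹ ^ 2 ∂gaussPi 4 t
          ≤ (κ * (ENNReal.ofReal (nrm a))⁻¹) ^ 2 := by
  set c := invNrmSqBallIntegral 4
  have hc : c ≠ ⊤ := (invNrmSqBallIntegral_lt_top (by norm_num)).ne
  set κ := 4 * (8 * c + 1)
  have hcκ : c + 1 ≤ κ := by
    calc c + 1 ≤ 8 * c + 1 := by gcongr; exact le_mul_of_one_le_left' (by norm_num)
      _ ≤ κ := le_mul_of_one_le_left' (by norm_num)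
  have hκ : κ ≤ κ ^ 2 := le_self_pow₀ (le_add_self.trans hcκ) two_ne_zero
  refine ⟨κ, by positivity, by simp [κ, ENNReal.mul_eq_top, hc], fun t a ht => ⟨?_, ?_⟩⟩
  · calc _ ≤ (c + 1) * (ENNReal.ofReal √t)⁻¹ ^ 2 :=
          lintegral_gaussPi_four_inv_nrm_sub_sq_le_inv_time ht a
      _ ≤ κ ^ 2 * (ENNReal.ofReal √t)⁻¹ ^ 2 := by gcongr; exact hcκ.trans hκ
      _ = _ := by ring
  · calc _ ≤ κ * (ENNReal.ofReal (nrm a))⁻¹ ^ 2 :=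
          lintegral_gaussPi_four_inv_nrm_sub_sq_le_inv_nrm ht a
      _ ≤ κ ^ 2 * (ENNReal.ofReal (nrm a))⁻¹ ^ 2 := by gcongr
      _ = _ := by ring

/-- Mixed bound (bine3): for standard 4-dimensional Brownian motion and `x ≠ y`,
`E[|β_t − x|⁻²|β_t − y|⁻¹] ≤ 2C t^{-1/2} |x|⁻¹ |y − x|⁻¹`. -/
theorem bm4_inverse_mixed_moment :
    ∃ C : ℝ≥0∞, 0 < C ∧ C ≠ ⊤ ∧ ∀ (t : ℝ≥0) (x y : Fin 4 → ℝ), 0 < t → x ≠ y →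
      (∫⁻ z, ((ENNReal.ofReal (nrm (z - x)))⁻¹) ^ 2 * (ENNReal.ofReal (nrm (z - y)))⁻¹
          ∂(gaussPi 4 t)) ≤
        2 * C * (ENNReal.ofReal (Real.sqrt t))⁻¹ * (ENNReal.ofReal (nrm x))⁻¹ *
          (ENNReal.ofReal (nrm (y - x)))⁻¹ := by
  obtain ⟨κ, hκ₀, hκ, hmoment⟩ := exists_lintegral_gaussPi_four_inv_nrm_sub_sq_le
  refine ⟨κ ^ 2, by positivity, ENNReal.pow_ne_top hκ, fun t x y ht hxy => ?_⟩
  set u : (Fin 4 → ℝ) → ℝ≥0∞ := fun z => (ENNReal.ofReal (nrm (z - x)))⁻¹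
  set v : (Fin 4 → ℝ) → ℝ≥0∞ := fun z => (ENNReal.ofReal (nrm (z - y)))⁻¹
  set D := ENNReal.ofReal (nrm (y - x))
  have hD₀ : D ≠ 0 := by simpa [D] using nrm_pos (sub_ne_zero.mpr hxy.symm)
  have hu : Measurable u := by fun_prop
  have hpoint : ∀ z, u z ^ 2 * v z ≤ D⁻¹ * (u z ^ 2 + u z * v z) := fun z =>
    ENNReal.sq_mul_le_inv_mul_add hD₀ ENNReal.ofReal_ne_top (by
      rw [inv_inv, inv_inv, ← ENNReal.ofReal_add (nrm_nonneg _) (nrm_nonneg _)]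
      exact ENNReal.ofReal_le_ofReal (nrm_sub_le_add x y z))
  have hsq := ENNReal.le_mul_of_le_sq_of_le_sq (hmoment t x ht).1 (hmoment t x ht).2
  have hcross := lintegral_mul_le_of_le_sq hu.aemeasurable
    (by fun_prop : Measurable v).aemeasurable (hmoment t x ht).2 (hmoment t y ht).1
  calc ∫⁻ z, u z ^ 2 * v z ∂gaussPi 4 t
      ≤ ∫⁻ z, D⁻¹ * (u z ^ 2 + u z * v z) ∂gaussPi 4 t :=
        lintegral_mono hpoint
    _ = D⁻¹ * (∫⁻ z, u z ^ 2 ∂gaussPi 4 t + ∫⁻ z, u z * v z ∂gaussPi 4 t) := by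
        rw [lintegral_const_mul' _ _ (ENNReal.inv_ne_top.mpr hD₀),
          lintegral_add_left (hu.pow_const 2)]
    _ ≤ _ := by
        grw [hsq, hcross]
        exact le_of_eq (by ring)

end
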